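/- arXiv:1404.6956 — 4 statements merged into one kernel-verified Lean document; each statement's English description precedes it below -/
import Mathlib

section
/- Let H be a Hilbert space, (S_n) an increasing sequence of nonempty convex subsets of H with union S_∞, x ∈ H, and for each n let x_n ∈ S_n satisfy ‖x − x_n‖ < d(x, S_n) + 2^{−n}. If the sequence (d(x, S_n)) converges (to d(x, S_∞)), then (x_n) is a Cauchy sequence and hence converges to a limit x_∞ ∈ closure(S_∞) with ‖x − x_∞‖ = d(x, S_∞). -/
/-!
In a real inner product space the parallelogram law (Apollonius's theorem) bounds the distance
between two points by how far each of them is from minimizing the distance to `x`, as soon as their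
midpoint is no closer to `x` than the infimum. The midpoint of `xₘ` and `xₙ` lies in `S (max m n)`
by monotonicity and convexity, so it is at distance at least `d(x, S_∞)` from `x`; since
`‖x - xₙ‖ → d(x, S_∞)`, the sequence is Cauchy, and its limit realizes the distance by continuity.
-/

open Metric Filter Topology

section Apollonius

variable {V P : Type*} [NormedAddCommGroup V] [InnerProductSpace ℝ V] [MetricSpace P]
  [NormedAddTorsor V P]

theorem dist_sq_le_of_le_dist_midpoint {a b c : P} {d : ℝ} (hd : 0 ≤ d)
    (hmid : d ≤ dist a (midpoint ℝ b c)) :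
    dist b c ^ 2 ≤ 2 * (dist a b ^ 2 - d ^ 2) + 2 * (dist a c ^ 2 - d ^ 2) := by
  have hsq : d ^ 2 ≤ dist a (midpoint ℝ b c) ^ 2 := pow_le_pow_left₀ hd hmid 2
  linarith [EuclideanGeometry.dist_sq_add_dist_sq_eq_two_mul_dist_midpoint_sq_add_half_dist_sq a b c]

theorem cauchySeq_of_tendsto_dist_of_le_dist_midpoint {u : ℕ → P} {a : P} {d : ℝ}
    (hu : Tendsto (fun n => dist a (u n)) atTop (𝓝 d))
    (hmid : ∀ m n, d ≤ dist a (midpoint ℝ (u m) (u n))) :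
    CauchySeq u := by
  have hd : 0 ≤ d := ge_of_tendsto' hu fun _ => dist_nonneg
  set excess : ℕ → ℝ := fun n => 2 * (dist a (u n) ^ 2 - d ^ 2)
  have hexcess : Tendsto excess atTop (𝓝 0) := by
    have h := ((hu.pow 2).sub_const (d ^ 2)).const_mul 2
    rwa [sub_self, mul_zero] at h
  have hbound : ∀ p : ℕ × ℕ, dist (u p.1) (u p.2) ≤ √(excess p.1 + excess p.2) := fun p =>
    Real.le_sqrt_of_sq_le (dist_sq_le_of_le_dist_midpoint hd (hmid p.1 p.2))
  have hsqrt : Tendsto (fun p : ℕ × ℕ => √(excess p.1 + excess p.2)) atTop (𝓝 0) := by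
    rw [← prod_atTop_atTop_eq]
    simpa using ((hexcess.comp tendsto_fst).add (hexcess.comp tendsto_snd)).sqrt
  rw [cauchySeq_iff_tendsto_dist_atTop_0]
  exact squeeze_zero (fun _ => dist_nonneg) hbound hsqrt

end Apollonius

theorem tendsto_two_zpow_neg_natCast_atTop :
    Tendsto (fun n : ℕ => (2 : ℝ) ^ (-(n : ℤ))) atTop (𝓝 0) := by
  simpa [zpow_neg, Function.comp_def] using
    tendsto_inv_atTop_zero.comp (tendsto_pow_atTop_atTop_of_one_lt (one_lt_two (α := ℝ)))

theorem stmt2_general {H : Type*} [NormedAddCommGroup H] [InnerProductSpace ℝ H] [CompleteSpace H]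
    (S : ℕ → Set H) (hmono : Monotone S) (hconv : ∀ n, Convex ℝ (S n))
    (x : H) (xseq : ℕ → H)
    (hmem : ∀ n, xseq n ∈ S n)
    (hclose : ∀ n, ‖x - xseq n‖ < infDist x (S n) + 2 ^ (-(n : ℤ)))
    (hdist : Tendsto (fun n => infDist x (S n)) atTop
      (nhds (infDist x (⋃ n, S n)))) :
    CauchySeq xseq ∧
    ∃ xinf ∈ closure (⋃ n, S n), Tendsto xseq atTop (nhds xinf) ∧
      ‖x - xinf‖ = infDist x (⋃ n, S n) := by
  have hsub : ∀ n, S n ⊆ ⋃ n, S n := Set.subset_iUnion S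
  have hdist_le : ∀ n, infDist x (⋃ n, S n) ≤ infDist x (S n) := fun n =>
    infDist_le_infDist_of_subset (hsub n) ⟨_, hmem n⟩
  have hnorm : Tendsto (fun n => dist x (xseq n)) atTop (𝓝 (infDist x (⋃ n, S n))) := by
    refine tendsto_of_tendsto_of_tendsto_of_le_of_le hdist
      (by simpa using hdist.add tendsto_two_zpow_neg_natCast_atTop)
      (fun n => infDist_le_dist_of_mem (hmem n)) (fun n => ?_)
    simpa [dist_eq_norm] using (hclose n).le
  have hmid : ∀ m n, infDist x (⋃ n, S n) ≤ dist x (midpoint ℝ (xseq m) (xseq n)) := by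
    intro m n
    have hmid_mem : midpoint ℝ (xseq m) (xseq n) ∈ S (max m n) :=
      (hconv _).segment_subset (hmono (le_max_left m n) (hmem m))
        (hmono (le_max_right m n) (hmem n)) (midpoint_mem_segment _ _)
    exact (hdist_le _).trans (infDist_le_dist_of_mem hmid_mem)
  have hcauchy := cauchySeq_of_tendsto_dist_of_le_dist_midpoint hnorm hmid
  obtain ⟨xinf, hxinf⟩ := cauchySeq_tendsto_of_complete hcauchy
  refine ⟨hcauchy, xinf, ?_, hxinf, ?_⟩
  · exact mem_closure_of_tendsto hxinf (Eventually.of_forall fun n => hsub n (hmem n))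
  · rw [← dist_eq_norm]
    exact tendsto_nhds_unique (tendsto_const_nhds.dist hxinf) hnorm

theorem stmt2 {H : Type*} [NormedAddCommGroup H] [InnerProductSpace ℝ H] [CompleteSpace H]
    (S : ℕ → Set H) (hmono : Monotone S) (hconv : ∀ n, Convex ℝ (S n))
    (hne : ∀ n, (S n).Nonempty) (x : H) (xseq : ℕ → H)
    (hmem : ∀ n, xseq n ∈ S n)
    (hclose : ∀ n, ‖x - xseq n‖ < infDist x (S n) + 2 ^ (-(n : ℤ)))
    (hdist : Tendsto (fun n => infDist x (S n)) atTop
      (nhds (infDist x (⋃ n, S n)))) :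
    CauchySeq xseq ∧
    ∃ xinf ∈ closure (⋃ n, S n), Tendsto xseq atTop (nhds xinf) ∧
      ‖x - xinf‖ = infDist x (⋃ n, S n) :=
  stmt2_general S hmono hconv x xseq hmem hclose hdist
end

section
/- Let 𝔄 be a linear subspace of the bounded operators on a Hilbert space H, let 𝔄_n denote {A ∈ 𝔄 : ‖A‖ ≤ n}, and let x, y ∈ H. Suppose for some positive integer N that d(y, 𝔄_N x) = d(y, 𝔄_{N+1} x), where 𝔄_N x = {Ax : A ∈ 𝔄_N}. If z is the closest point to y in the closure of 𝔄_N x, then y − z is orthogonal to Ax for every A ∈ 𝔄, and consequently d(y, 𝔄x) exists and equals d(y, 𝔄_N x). -/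
/-!
If `z` is nearest to `y` in `closure (𝔄_N x)`, then for `A ∈ 𝔄` and small `t` the point
`z + t • A x` lies in `closure (𝔄_{N+1} x)`, whose distance to `y` is still `‖y - z‖`. Hence
`t ↦ ‖y - z - t • A x‖` has a local minimum at `t = 0`, which forces `⟪y - z, A x⟫ = 0`. By
continuity `y - z` is also orthogonal to `z`, and Pythagoras gives `‖y - z‖ ≤ ‖y - A x‖` for every
`A ∈ 𝔄`.
-/

open Metric

open Filter Topology
open scoped InnerProductSpace

section InnerProduct

variable {𝕜 E : Type*} [RCLike 𝕜] [NormedAddCommGroup E] [InnerProductSpace 𝕜 E]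

theorem inner_eq_zero_of_eventually_norm_le_norm_sub_smul {u v : E}
    (h : ∀ᶠ t in 𝓝 (0 : 𝕜), ‖u‖ ≤ ‖u - t • v‖) : ⟪u, v⟫_𝕜 = 0 := by
  set c := ⟪u, v⟫_𝕜
  -- along `t = s * conj c` the first-order term of `‖u - t • v‖ ^ 2` is `-2 s ‖c‖ ^ 2`
  have hray : Tendsto (fun s : ℝ => (s : 𝕜) * starRingEnd 𝕜 c) (𝓝[>] 0) (𝓝 0) :=
    tendsto_nhdsWithin_of_tendsto_nhds <|
      (by fun_prop : Continuous fun s : ℝ => (s : 𝕜) * starRingEnd 𝕜 c).tendsto' 0 0 (by simp)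
  have hsmall : ∀ᶠ s in 𝓝[>] (0 : ℝ), 2 * ‖c‖ ^ 2 ≤ s * (‖c‖ ^ 2 * ‖v‖ ^ 2) := by
    filter_upwards [hray.eventually h, self_mem_nhdsWithin] with s hs (hs_pos : 0 < s)
    have hexp : ‖u - ((s : 𝕜) * starRingEnd 𝕜 c) • v‖ ^ 2
        = ‖u‖ ^ 2 - s * (2 * ‖c‖ ^ 2) + s * (s * (‖c‖ ^ 2 * ‖v‖ ^ 2)) := by
      rw [@norm_sub_sq 𝕜, inner_smul_right, mul_assoc, RCLike.conj_mul, ← RCLike.ofReal_pow,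
        ← RCLike.ofReal_mul, RCLike.ofReal_re, norm_smul, norm_mul, RCLike.norm_conj,
        RCLike.norm_ofReal, abs_of_pos hs_pos]
      ring
    have hsq := pow_le_pow_left₀ (norm_nonneg u) hs 2
    exact le_of_mul_le_mul_left (by linarith) hs_pos
  have hlim : Tendsto (fun s : ℝ => s * (‖c‖ ^ 2 * ‖v‖ ^ 2)) (𝓝[>] 0) (𝓝 0) :=
    tendsto_nhdsWithin_of_tendsto_nhds <|
      (by fun_prop : Continuous fun s : ℝ => s * (‖c‖ ^ 2 * ‖v‖ ^ 2)).tendsto' 0 0 (by simp)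
  have hc : ‖c‖ ^ 2 ≤ 0 := by linarith [ge_of_tendsto hlim hsmall]
  simpa using le_antisymm hc (sq_nonneg _)

theorem norm_sub_le_norm_sub_of_inner_eq_zero {y z w : E} (h : ⟪y - z, z - w⟫_𝕜 = 0) :
    ‖y - z‖ ≤ ‖y - w‖ := by
  have hpyth := norm_add_sq_eq_norm_sq_add_norm_sq_of_inner_eq_zero _ _ h
  rw [sub_add_sub_cancel] at hpyth
  exact (pow_le_pow_iff_left₀ (norm_nonneg _) (norm_nonneg _) two_ne_zero).mp
    (by rw [pow_two, pow_two, hpyth]; nlinarith [mul_self_nonneg ‖z - w‖])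

end InnerProduct

section Orbit

variable {𝕜 E F : Type*} [NontriviallyNormedField 𝕜] [NormedAddCommGroup E] [NormedSpace 𝕜 E]
  [NormedAddCommGroup F] [NormedSpace 𝕜 F]

/-- `𝔄_r x` in the paper's notation. -/
def boundedOrbit (𝔄 : Submodule 𝕜 (E →L[𝕜] F)) (x : E) (r : ℝ) : Set F :=
  (fun A : E →L[𝕜] F => A x) '' {A | A ∈ 𝔄 ∧ ‖A‖ ≤ r}

variable {𝔄 : Submodule 𝕜 (E →L[𝕜] F)} {x : E} {r s : ℝ}

theorem zero_mem_boundedOrbit (hr : 0 ≤ r) : (0 : F) ∈ boundedOrbit 𝔄 x r :=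
  ⟨0, ⟨𝔄.zero_mem, by simpa using hr⟩, rfl⟩

theorem boundedOrbit_subset_image : boundedOrbit 𝔄 x r ⊆ (fun A : E →L[𝕜] F => A x) '' 𝔄 :=
  Set.image_mono fun _ hA => hA.1

theorem boundedOrbit_mono (hrs : r ≤ s) : boundedOrbit 𝔄 x r ⊆ boundedOrbit 𝔄 x s :=
  Set.image_mono fun _ hA => ⟨hA.1, hA.2.trans hrs⟩

theorem add_smul_apply_mem_boundedOrbit {w : F} (hw : w ∈ boundedOrbit 𝔄 x r) {A : E →L[𝕜] F}
    (hA : A ∈ 𝔄) (t : 𝕜) : w + t • A x ∈ boundedOrbit 𝔄 x (r + ‖t‖ * ‖A‖) := by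
  obtain ⟨B, ⟨hB, hBr⟩, rfl⟩ := hw
  refine ⟨B + t • A, ⟨𝔄.add_mem hB (𝔄.smul_mem t hA), ?_⟩, rfl⟩
  calc ‖B + t • A‖ ≤ ‖B‖ + ‖t • A‖ := norm_add_le _ _
    _ ≤ r + ‖t‖ * ‖A‖ := by rw [norm_smul]; gcongr

theorem add_smul_apply_mem_closure_boundedOrbit {w : F} (hw : w ∈ closure (boundedOrbit 𝔄 x r))
    {A : E →L[𝕜] F} (hA : A ∈ 𝔄) (t : 𝕜) :
    w + t • A x ∈ closure (boundedOrbit 𝔄 x (r + ‖t‖ * ‖A‖)) :=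
  map_mem_closure (f := (· + t • A x)) (continuous_add_const _) hw fun _ hv =>
    add_smul_apply_mem_boundedOrbit hv hA t

theorem norm_sub_le_norm_sub_sub_smul_apply {y z : F}
    (hdist : infDist y (boundedOrbit 𝔄 x r) = infDist y (boundedOrbit 𝔄 x s))
    (hz : z ∈ closure (boundedOrbit 𝔄 x r)) (hzmin : ‖y - z‖ = infDist y (boundedOrbit 𝔄 x r))
    {A : E →L[𝕜] F} (hA : A ∈ 𝔄) {t : 𝕜} (ht : r + ‖t‖ * ‖A‖ ≤ s) :
    ‖y - z‖ ≤ ‖y - z - t • A x‖ := by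
  have hmem : z + t • A x ∈ closure (boundedOrbit 𝔄 x s) :=
    closure_mono (boundedOrbit_mono ht) (add_smul_apply_mem_closure_boundedOrbit hz hA t)
  calc ‖y - z‖ = infDist y (closure (boundedOrbit 𝔄 x s)) := by rw [infDist_closure, hzmin, hdist]
    _ ≤ dist y (z + t • A x) := infDist_le_dist_of_mem hmem
    _ = ‖y - z - t • A x‖ := by rw [dist_eq_norm, sub_sub]

end Orbit

section InnerProductOrbit

variable {𝕜 E F : Type*} [RCLike 𝕜] [NormedAddCommGroup E] [NormedSpace 𝕜 E]
  [NormedAddCommGroup F] [InnerProductSpace 𝕜 F] {𝔄 : Submodule 𝕜 (E →L[𝕜] F)} {x : E} {y z : F}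
  {r s : ℝ}

theorem inner_sub_apply_eq_zero_of_infDist_eq (hrs : r < s)
    (hdist : infDist y (boundedOrbit 𝔄 x r) = infDist y (boundedOrbit 𝔄 x s))
    (hz : z ∈ closure (boundedOrbit 𝔄 x r)) (hzmin : ‖y - z‖ = infDist y (boundedOrbit 𝔄 x r))
    {A : E →L[𝕜] F} (hA : A ∈ 𝔄) : ⟪y - z, A x⟫_𝕜 = 0 := by
  refine inner_eq_zero_of_eventually_norm_le_norm_sub_smul ?_
  have hsmall : ∀ᶠ t in 𝓝 (0 : 𝕜), r + ‖t‖ * ‖A‖ < s :=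
    (by fun_prop : Continuous fun t : 𝕜 => r + ‖t‖ * ‖A‖).continuousAt.eventually_lt
      continuousAt_const (by simpa using hrs)
  filter_upwards [hsmall] with t ht
  exact norm_sub_le_norm_sub_sub_smul_apply hdist hz hzmin hA ht.le

theorem infDist_image_eq_of_forall_inner_eq_zero (hr : 0 ≤ r)
    (hz : z ∈ closure (boundedOrbit 𝔄 x r)) (hzmin : ‖y - z‖ = infDist y (boundedOrbit 𝔄 x r))
    (horth : ∀ A ∈ 𝔄, ⟪y - z, A x⟫_𝕜 = 0) :
    infDist y ((fun A : E →L[𝕜] F => A x) '' 𝔄) = infDist y (boundedOrbit 𝔄 x r) := by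
  have hzorth : ⟪y - z, z⟫_𝕜 = 0 :=
    closure_minimal (by rintro _ ⟨A, ⟨hA, -⟩, rfl⟩; exact horth A hA)
      (isClosed_eq (continuous_const.inner continuous_id) continuous_const) hz
  refine le_antisymm
    (infDist_le_infDist_of_subset boundedOrbit_subset_image ⟨0, zero_mem_boundedOrbit hr⟩) ?_
  rw [← hzmin, le_infDist (Set.image_nonempty.mpr ⟨0, 𝔄.zero_mem⟩)]
  rintro _ ⟨A, hA, rfl⟩
  rw [dist_eq_norm]
  exact norm_sub_le_norm_sub_of_inner_eq_zero (𝕜 := 𝕜)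
    (by rw [inner_sub_right, hzorth, horth A hA, sub_zero])

end InnerProductOrbit

theorem stmt4_general {H : Type*} [NormedAddCommGroup H] [InnerProductSpace ℂ H]
    (𝔄 : Submodule ℂ (H →L[ℂ] H)) (x y : H) (N : ℕ)
    (hdist : infDist y ((fun A : H →L[ℂ] H => A x) '' {A | A ∈ 𝔄 ∧ ‖A‖ ≤ N}) =
             infDist y ((fun A : H →L[ℂ] H => A x) '' {A | A ∈ 𝔄 ∧ ‖A‖ ≤ N + 1}))
    (z : H)
    (hz : z ∈ closure ((fun A : H →L[ℂ] H => A x) '' {A | A ∈ 𝔄 ∧ ‖A‖ ≤ N}))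
    (hzmin : ‖y - z‖ = infDist y ((fun A : H →L[ℂ] H => A x) '' {A | A ∈ 𝔄 ∧ ‖A‖ ≤ N})) :
    (∀ A ∈ 𝔄, inner ℂ (y - z) (A x) = (0 : ℂ)) ∧
    infDist y ((fun A : H →L[ℂ] H => A x) '' (𝔄 : Set (H →L[ℂ] H))) =
      infDist y ((fun A : H →L[ℂ] H => A x) '' {A | A ∈ 𝔄 ∧ ‖A‖ ≤ N}) := by
  have horth : ∀ A ∈ 𝔄, inner ℂ (y - z) (A x) = (0 : ℂ) := fun A hA =>
    inner_sub_apply_eq_zero_of_infDist_eq (lt_add_one (N : ℝ)) hdist hz hzmin hA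
  exact ⟨horth, infDist_image_eq_of_forall_inner_eq_zero N.cast_nonneg hz hzmin horth⟩

theorem stmt4 {H : Type*} [NormedAddCommGroup H] [InnerProductSpace ℂ H] [CompleteSpace H]
    (𝔄 : Submodule ℂ (H →L[ℂ] H)) (x y : H) (N : ℕ) (hN : 0 < N)
    (hdist : infDist y ((fun A : H →L[ℂ] H => A x) '' {A | A ∈ 𝔄 ∧ ‖A‖ ≤ N}) =
             infDist y ((fun A : H →L[ℂ] H => A x) '' {A | A ∈ 𝔄 ∧ ‖A‖ ≤ N + 1}))
    (z : H)
    (hz : z ∈ closure ((fun A : H →L[ℂ] H => A x) '' {A | A ∈ 𝔄 ∧ ‖A‖ ≤ N}))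
    (hzmin : ‖y - z‖ = infDist y ((fun A : H →L[ℂ] H => A x) '' {A | A ∈ 𝔄 ∧ ‖A‖ ≤ N})) :
    (∀ A ∈ 𝔄, inner ℂ (y - z) (A x) = (0 : ℂ)) ∧
    infDist y ((fun A : H →L[ℂ] H => A x) '' (𝔄 : Set (H →L[ℂ] H))) =
      infDist y ((fun A : H →L[ℂ] H => A x) '' {A | A ∈ 𝔄 ∧ ‖A‖ ≤ N}) :=
  stmt4_general 𝔄 x y N hdist z hz hzmin
end

section
/- Let 𝔄 be a linear subspace of B(H), x ∈ H, and suppose there exists r > 0 such that 𝔄x ∩ B(0, r) ⊆ 𝔄_1 x, where 𝔄_1 = {A ∈ 𝔄 : ‖A‖ ≤ 1}. Then for each y ∈ H and each positive integer N > 2‖y‖/r, the distance from y to 𝔄x equals the distance from y to 𝔄_N x, where 𝔄_N x = {N A x : A ∈ 𝔄_1}. -/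
/-!
A point of `𝔄x` that is nearly closest to `y` has norm below `2‖y‖`, since `0 ∈ 𝔄x` is already
within `‖y‖` of `y`. Scaling the hypothesis by `N` shows that every point of `𝔄x` of norm
`< N r` lies in `𝔄_N x`, so the near-minimisers lie in `𝔄_N x ⊆ 𝔄x` and the two distances agree.
-/

open Metric Pointwise

section InfDist

variable {E : Type*} [SeminormedAddCommGroup E]

theorem infDist_inter_ball_zero_eq {S : Set E} {y : E} {R : ℝ} (h0 : 0 ∈ S) (hR : 2 * ‖y‖ < R) :
    infDist y (S ∩ ball 0 R) = infDist y S := by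
  have h0R : (0 : E) ∈ S ∩ ball 0 R := ⟨h0, mem_ball_self (by linarith [norm_nonneg y])⟩
  refine le_antisymm ((le_infDist ⟨0, h0⟩).2 fun z hz => ?_)
    (infDist_le_infDist_of_subset Set.inter_subset_left ⟨0, h0R⟩)
  by_cases hzR : z ∈ ball 0 R
  · exact infDist_le_dist_of_mem ⟨hz, hzR⟩
  · -- far points of `S` are farther from `y` than `0` is
    have hRz : R ≤ ‖z‖ := by simpa using hzR
    calc infDist y (S ∩ ball 0 R) ≤ dist y 0 := infDist_le_dist_of_mem h0R
      _ ≤ ‖z‖ - ‖y‖ := by rw [dist_zero_right]; linarith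
      _ ≤ dist y z := by rw [dist_comm, dist_eq_norm]; exact norm_sub_norm_le z y

theorem infDist_eq_of_inter_ball_zero_subset {S T : Set E} {y : E} {R : ℝ} (h0 : 0 ∈ S)
    (hR : 2 * ‖y‖ < R) (hST : S ∩ ball 0 R ⊆ T) (hTS : T ⊆ S) :
    infDist y T = infDist y S := by
  have h0R : (0 : E) ∈ S ∩ ball 0 R := ⟨h0, mem_ball_self (by linarith [norm_nonneg y])⟩
  refine le_antisymm ?_ (infDist_le_infDist_of_subset hTS ⟨0, hST h0R⟩)
  calc infDist y T ≤ infDist y (S ∩ ball 0 R) := infDist_le_infDist_of_subset hST ⟨0, h0R⟩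
    _ = infDist y S := infDist_inter_ball_zero_eq h0 hR

end InfDist

theorem Submodule.inter_ball_zero_subset_smul {𝕜 E : Type*} [NormedField 𝕜]
    [SeminormedAddCommGroup E] [NormedSpace 𝕜 E] (V : Submodule 𝕜 E) {K : Set E} {r : ℝ}
    (hK : (V : Set E) ∩ ball 0 r ⊆ K) {c : 𝕜} (hc : c ≠ 0) :
    (V : Set E) ∩ ball 0 (‖c‖ * r) ⊆ c • K := by
  rintro v ⟨hvV, hv⟩
  refine Set.mem_smul_set.2 ⟨c⁻¹ • v, hK ⟨V.smul_mem _ hvV, ?_⟩, smul_inv_smul₀ hc v⟩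
  rw [mem_ball_zero_iff] at hv ⊢
  rw [norm_smul, norm_inv, inv_mul_lt_iff₀ (norm_pos_iff.2 hc)]
  exact hv

theorem stmt6_general {H : Type*} [NormedAddCommGroup H] [InnerProductSpace ℂ H]
    (𝔄 : Submodule ℂ (H →L[ℂ] H)) (x : H) (r : ℝ) (hr : 0 < r)
    (hincl : ((fun A : H →L[ℂ] H => A x) '' (𝔄 : Set (H →L[ℂ] H))) ∩ ball 0 r ⊆
      (fun A : H →L[ℂ] H => A x) '' {A | A ∈ 𝔄 ∧ ‖A‖ ≤ 1}) :
    ∀ y : H, ∀ N : ℕ, (N : ℝ) > 2 * ‖y‖ / r →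
      infDist y ((fun A : H →L[ℂ] H => A x) '' (𝔄 : Set (H →L[ℂ] H))) =
      infDist y ((fun A : H →L[ℂ] H => (N : ℂ) • A x) '' {A | A ∈ 𝔄 ∧ ‖A‖ ≤ 1}) := by
  intro y N hN
  set V : Submodule ℂ H := 𝔄.map (ContinuousLinearMap.apply ℂ H x : (H →L[ℂ] H) →ₗ[ℂ] H)
  set K : Set H := (fun A : H →L[ℂ] H => A x) '' {A | A ∈ 𝔄 ∧ ‖A‖ ≤ 1}
  have hV : (V : Set H) = (fun A : H →L[ℂ] H => A x) '' 𝔄 := Submodule.map_coe _ _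
  have hT : (fun A : H →L[ℂ] H => (N : ℂ) • A x) '' {A | A ∈ 𝔄 ∧ ‖A‖ ≤ 1} = (N : ℂ) • K := by
    rw [← Set.image_smul, Set.image_image]
  have hNr : 2 * ‖y‖ < ‖(N : ℂ)‖ * r := by
    rw [Complex.norm_natCast]; exact (div_lt_iff₀ hr).1 hN
  have hN0 : (N : ℂ) ≠ 0 := by
    rintro h; rw [h, norm_zero, zero_mul] at hNr; linarith [norm_nonneg y]
  have hKV : K ⊆ V := hV ▸ Set.image_mono fun A hA => hA.1
  rw [hT, ← hV]
  refine (infDist_eq_of_inter_ball_zero_subset V.zero_mem hNr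
    (V.inter_ball_zero_subset_smul (hV ▸ hincl) hN0) ?_).symm
  exact Set.smul_set_subset_iff.2 fun v hv => V.smul_mem _ (hKV hv)

theorem stmt6 {H : Type*} [NormedAddCommGroup H] [InnerProductSpace ℂ H] [CompleteSpace H]
    (𝔄 : Submodule ℂ (H →L[ℂ] H)) (x : H) (r : ℝ) (hr : 0 < r)
    (hincl : ((fun A : H →L[ℂ] H => A x) '' (𝔄 : Set (H →L[ℂ] H))) ∩ ball 0 r ⊆
      (fun A : H →L[ℂ] H => A x) '' {A | A ∈ 𝔄 ∧ ‖A‖ ≤ 1}) :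
    ∀ y : H, ∀ N : ℕ, (N : ℝ) > 2 * ‖y‖ / r →
      infDist y ((fun A : H →L[ℂ] H => A x) '' (𝔄 : Set (H →L[ℂ] H))) =
      infDist y ((fun A : H →L[ℂ] H => (N : ℂ) • A x) '' {A | A ∈ 𝔄 ∧ ‖A‖ ≤ 1}) :=
  stmt6_general 𝔄 x r hr hincl
end

section
/- Open mapping theorem via superconvexity: Let X be a Banach space and C ⊆ X a bounded, balanced, superconvex subset such that X = ⋃_{n≥1} nC. Then there exists r > 0 such that the open ball B(0, r) is contained in C. -/
/-!
By Baire's theorem some `n • closure C` has interior, hence so does `closure C`; as `closure C` is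
convex (superconvexity gives convexity) and balanced, it contains a ball `ball 0 ε`. Successive
approximation from `C` then writes each `y ∈ ball 0 ε` as `∑ 2⁻ⁿ cₙ` with `cₙ ∈ C`, the series
converging because `C` is bounded. Hence `y / 2 = ∑ 2⁻⁽ⁿ⁺¹⁾ cₙ` is a countable convex combination
of points of `C`, so it lies in `C`, and `ball 0 (ε / 2) ⊆ C`.
-/

open Metric Pointwise Finset

def Superconvex {X : Type*} [AddCommMonoid X] [Module ℝ X] [TopologicalSpace X] (C : Set X) :
    Prop :=
  ∀ (x : ℕ → X), (∀ n, x n ∈ C) → ∀ (l : ℕ → ℝ), (∀ n, 0 ≤ l n) → HasSum l 1 →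
    ∀ s : X, HasSum (fun n => l n • x n) s → s ∈ C

theorem Superconvex.convex {X : Type*} [AddCommMonoid X] [Module ℝ X] [TopologicalSpace X]
    {C : Set X} (hC : Superconvex C) : Convex ℝ C := by
  intro a ha b hb p q hp hq hpq
  let x : ℕ → X := fun n => if n = 0 then a else b
  let l : ℕ → ℝ := fun n => if n = 0 then p else if n = 1 then q else 0
  have hl : ∀ n ∉ range 2, l n = 0 := by
    intro n hn
    simp only [mem_range, not_lt] at hn
    simp [l, show n ≠ 0 by omega, show n ≠ 1 by omega]
  have hlx : ∀ n ∉ range 2, l n • x n = 0 := fun n hn => by rw [hl n hn, zero_smul]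
  refine hC x (fun n => ?_) l (fun n => ?_) ?_ _ ?_
  · by_cases h : n = 0 <;> simp [x, h, ha, hb]
  · rcases n with _ | _ | n <;> simp [l, hp, hq]
  · simpa [sum_range_succ, l, hpq] using hasSum_sum_of_ne_finset_zero hl
  · simpa [sum_range_succ, l, x] using hasSum_sum_of_ne_finset_zero hlx

theorem Superconvex.inv_two_smul_mem {X : Type*} [AddCommMonoid X] [Module ℝ X]
    [TopologicalSpace X] [ContinuousConstSMul ℝ X] {C : Set X} (hC : Superconvex C)
    {c : ℕ → X} (hc : ∀ n, c n ∈ C) {y : X} (hy : HasSum (fun n => (2⁻¹ : ℝ) ^ n • c n) y) :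
    (2⁻¹ : ℝ) • y ∈ C := by
  refine hC c hc (fun n => (2⁻¹ : ℝ) ^ (n + 1)) (fun n => by positivity) ?_ _ ?_
  · simpa [pow_succ', mul_comm] using hasSum_geometric_two.mul_left (2⁻¹ : ℝ)
  · convert hy.const_smul (2⁻¹ : ℝ) using 2 with n
    rw [smul_smul, pow_succ']

theorem Convex.zero_mem_interior_of_balanced {E : Type*} [AddCommGroup E] [Module ℝ E]
    [TopologicalSpace E] [IsTopologicalAddGroup E] [ContinuousSMul ℝ E] {A : Set E}
    (hconv : Convex ℝ A) (hbal : Balanced ℝ A) (hA : (interior A).Nonempty) :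
    (0 : E) ∈ interior A := by
  obtain ⟨y, hy⟩ := hA
  have hny : -y ∈ insert 0 (interior A) :=
    hbal.zero_insert_interior.neg_mem_iff.mpr (Set.mem_insert_of_mem _ hy)
  rcases hny with hny | hny
  · rwa [neg_eq_zero.mp hny] at hy
  · simpa using hconv.interior hy hny (by norm_num : (0 : ℝ) ≤ 2⁻¹) (by norm_num : (0 : ℝ) ≤ 2⁻¹)
      (by norm_num)

theorem nonempty_interior_closure_of_forall_mem_nat_smul {X : Type*} [AddCommGroup X]
    [Module ℝ X] [TopologicalSpace X] [T1Space X] [ContinuousConstSMul ℝ X] [BaireSpace X]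
    {C : Set X} (hcover : ∀ x : X, ∃ n : ℕ, 0 < n ∧ x ∈ (n : ℝ) • C) :
    (interior (closure C)).Nonempty := by
  have hU : ⋃ n : {n : ℕ // 0 < n}, closure ((n : ℝ) • C) = Set.univ := by
    refine Set.eq_univ_of_forall fun x => ?_
    obtain ⟨n, hn, hx⟩ := hcover x
    exact Set.mem_iUnion.mpr ⟨⟨n, hn⟩, subset_closure hx⟩
  obtain ⟨⟨n, hn⟩, hint⟩ := nonempty_interior_of_iUnion_of_closed (fun _ => isClosed_closure) hU
  have hn' : (n : ℝ) ≠ 0 := by positivity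
  rw [closure_smul₀, interior_smul₀ hn'] at hint
  exact Set.smul_set_nonempty.mp hint

section Normed

variable {X : Type*} [NormedAddCommGroup X] [NormedSpace ℝ X]

theorem hasSum_of_norm_sub_sum_le {c : ℕ → X} {y : X} {r M ε : ℝ} (hr₀ : 0 ≤ r) (hr₁ : r < 1)
    (hc : ∀ n, ‖c n‖ ≤ M) (h : ∀ n, ‖y - ∑ k ∈ range n, r ^ k • c k‖ ≤ ε * r ^ n) :
    HasSum (fun n => r ^ n • c n) y := by
  have hnorm : Summable fun n => ‖r ^ n • c n‖ := by
    refine Summable.of_nonneg_of_le (fun n => norm_nonneg _) (fun n => ?_)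
      ((summable_geometric_of_lt_one hr₀ hr₁).mul_left M)
    rw [norm_smul, Real.norm_of_nonneg (pow_nonneg hr₀ n), mul_comm]
    exact mul_le_mul_of_nonneg_right (hc n) (pow_nonneg hr₀ n)
  rw [hasSum_iff_tendsto_nat_of_summable_norm hnorm, tendsto_iff_norm_sub_tendsto_zero]
  refine squeeze_zero (g := fun n => ε * r ^ n) (fun n => norm_nonneg _)
    (fun n => by rw [norm_sub_rev]; exact h n) ?_
  simpa using (tendsto_pow_atTop_nhds_zero_of_lt_one hr₀ hr₁).const_mul ε

theorem exists_seq_norm_sub_sum_lt {C : Set X} {ε : ℝ} (h : ball (0 : X) ε ⊆ closure C) {y : X}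
    (hy : y ∈ ball (0 : X) ε) :
    ∃ c : ℕ → X, (∀ n, c n ∈ C) ∧
      ∀ n, ‖y - ∑ k ∈ range n, (2⁻¹ : ℝ) ^ k • c k‖ < ε * 2⁻¹ ^ n := by
  have step : ∀ z : ball (0 : X) ε, ∃ c ∈ C, (2 : ℝ) • ((z : X) - c) ∈ ball (0 : X) ε := by
    intro z
    obtain ⟨c, hcC, hc⟩ := Metric.mem_closure_iff.mp (h z.2) (ε / 2)
      (half_pos (pos_of_mem_ball z.2))
    refine ⟨c, hcC, ?_⟩
    rw [mem_ball_zero_iff, norm_smul, ← dist_eq_norm, Real.norm_ofNat]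
    linarith
  choose c hcC hc using step
  let u : ℕ → ball (0 : X) ε := fun n => (fun z => ⟨_, hc z⟩)^[n] ⟨y, hy⟩
  refine ⟨fun n => c (u n), fun n => hcC _, fun n => ?_⟩
  have key : ∀ n, y - ∑ k ∈ range n, (2⁻¹ : ℝ) ^ k • c (u k) = (2⁻¹ : ℝ) ^ n • (u n : X) := by
    intro n
    induction n with
    | zero => simp [u]
    | succ n ih =>
      have hu : (u (n + 1) : X) = (2 : ℝ) • ((u n : X) - c (u n)) := by
        simp only [u, Function.iterate_succ_apply']
      rw [sum_range_succ, ← sub_sub, ih, hu, smul_smul, pow_succ, mul_assoc]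
      norm_num [smul_sub]
  rw [key, norm_smul, Real.norm_of_nonneg (by positivity), mul_comm]
  exact mul_lt_mul_of_pos_right (mem_ball_zero_iff.mp (u n).2) (by positivity)

theorem Superconvex.ball_subset {C : Set X} (hC : Superconvex C) (hb : Bornology.IsBounded C)
    {ε : ℝ} (h : ball (0 : X) ε ⊆ closure C) : ball (0 : X) (ε / 2) ⊆ C := by
  intro x hx
  have h2x : (2 : ℝ) • x ∈ ball (0 : X) ε := by
    rw [mem_ball_zero_iff] at hx
    rw [mem_ball_zero_iff, norm_smul, Real.norm_ofNat]
    linarith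
  obtain ⟨c, hcC, hc⟩ := exists_seq_norm_sub_sum_lt h h2x
  obtain ⟨M, hM⟩ := hb.exists_norm_le
  have hsum := hasSum_of_norm_sub_sum_le (by norm_num) (by norm_num) (fun n => hM _ (hcC n))
    (fun n => (hc n).le)
  simpa [smul_smul] using hC.inv_two_smul_mem hcC hsum

end Normed

theorem stmt12 {X : Type*} [NormedAddCommGroup X] [NormedSpace ℝ X] [CompleteSpace X]
    (C : Set X) (hbdd : Bornology.IsBounded C) (hbal : Balanced ℝ C)
    (hsuper : ∀ (x : ℕ → X), (∀ n, x n ∈ C) →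
      ∀ (l : ℕ → ℝ), (∀ n, 0 ≤ l n) → HasSum l 1 →
      ∀ s : X, HasSum (fun n => l n • x n) s → s ∈ C)
    (hcover : ∀ x : X, ∃ n : ℕ, 0 < n ∧ x ∈ (fun c => (n : ℝ) • c) '' C) :
    ∃ r > (0 : ℝ), ball (0 : X) r ⊆ C := by
  have hsc : Superconvex C := hsuper
  have hint : (interior (closure C)).Nonempty :=
    nonempty_interior_closure_of_forall_mem_nat_smul (by simpa only [Set.image_smul] using hcover)
  have h0 : (0 : X) ∈ interior (closure C) :=
    hsc.convex.closure.zero_mem_interior_of_balanced hbal.closure hint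
  obtain ⟨ε, hε, hball⟩ := Metric.mem_nhds_iff.mp (mem_interior_iff_mem_nhds.mp h0)
  exact ⟨ε / 2, half_pos hε, hsc.ball_subset hbdd hball⟩
end
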